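/- Let k ≥ 1 and set n = 2k+1. For every natural number q, the coefficient of t^q in the formal power series (1 - t^{2k+2}) · (1 - t^2)⁻¹ · (1 - t^{2k})⁻¹ ∈ ℚ⟦t⟧ equals: 2 if q is a positive multiple of n - 1 = 2k; 1 if q is even and q is not a positive multiple of 2k; and 0 if q is odd. -/

import Mathlib

/-!
Since `1 - t^(2k+2) = (1 - t^2) + t^2 (1 - t^(2k))`, the series equals
`(1 - t^(2k))⁻¹ + t^2 (1 - t^2)⁻¹ = ∑ t^(2k j) + ∑_{i ≥ 1} t^(2i)`: every positive even degree
gets a `1` from the second sum, and the positive multiples of `2k` (and the degree `0`) one more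
from the first.
-/

open PowerSeries

namespace PowerSeries

variable {K : Type*} [Field K]

lemma inv_one_sub_X_pow {m : ℕ} (hm : m ≠ 0) :
    (1 - X ^ m : K⟦X⟧)⁻¹ = expand m hm (mk 1) := by
  rw [PowerSeries.inv_eq_iff_mul_eq_one (by simp [hm])]
  simpa using congrArg (expand m hm) (mk_one_mul_one_sub_eq_one K)

lemma coeff_inv_one_sub_X_pow {m : ℕ} (hm : m ≠ 0) (n : ℕ) :
    coeff n (1 - X ^ m : K⟦X⟧)⁻¹ = if m ∣ n then 1 else 0 := by
  simp [inv_one_sub_X_pow hm, coeff_expand]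

lemma one_sub_X_pow_add_mul_inv_mul_inv {a b : ℕ} (ha : a ≠ 0) (hb : b ≠ 0) :
    (1 - X ^ (b + a) : K⟦X⟧) * (1 - X ^ a)⁻¹ * (1 - X ^ b)⁻¹ =
      (1 - X ^ b)⁻¹ + X ^ a * (1 - X ^ a)⁻¹ := by
  have cancel {m : ℕ} (hm : m ≠ 0) : (1 - X ^ m : K⟦X⟧) * (1 - X ^ m)⁻¹ = 1 :=
    PowerSeries.mul_inv_cancel _ (by simp [hm])
  calc (1 - X ^ (b + a) : K⟦X⟧) * (1 - X ^ a)⁻¹ * (1 - X ^ b)⁻¹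
      = ((1 - X ^ a) * (1 - X ^ a)⁻¹) * (1 - X ^ b)⁻¹
          + X ^ a * (1 - X ^ a)⁻¹ * ((1 - X ^ b) * (1 - X ^ b)⁻¹) := by ring
    _ = (1 - X ^ b)⁻¹ + X ^ a * (1 - X ^ a)⁻¹ := by rw [cancel ha, cancel hb]; ring

end PowerSeries

theorem betti_numbers_odd (k : ℕ) (hk : 1 ≤ k) (q : ℕ) :
    ((0 < q ∧ 2 * k ∣ q) →
      (PowerSeries.coeff (R := ℚ) q)
        ((1 - (X : ℚ⟦X⟧) ^ (2 * k + 2)) * (1 - (X : ℚ⟦X⟧) ^ 2)⁻¹ *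
          (1 - (X : ℚ⟦X⟧) ^ (2 * k))⁻¹) = 2) ∧
    ((Even q ∧ ¬(0 < q ∧ 2 * k ∣ q)) →
      (PowerSeries.coeff (R := ℚ) q)
        ((1 - (X : ℚ⟦X⟧) ^ (2 * k + 2)) * (1 - (X : ℚ⟦X⟧) ^ 2)⁻¹ *
          (1 - (X : ℚ⟦X⟧) ^ (2 * k))⁻¹) = 1) ∧
    (Odd q →
      (PowerSeries.coeff (R := ℚ) q)
        ((1 - (X : ℚ⟦X⟧) ^ (2 * k + 2)) * (1 - (X : ℚ⟦X⟧) ^ 2)⁻¹ *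
          (1 - (X : ℚ⟦X⟧) ^ (2 * k))⁻¹) = 0) := by
  have h2k : 2 * k ≠ 0 := by omega
  rw [one_sub_X_pow_add_mul_inv_mul_inv two_ne_zero h2k, map_add, coeff_X_pow_mul',
    coeff_inv_one_sub_X_pow h2k, coeff_inv_one_sub_X_pow two_ne_zero]
  have two_dvd_of : 2 * k ∣ q → 2 ∣ q := (dvd_mul_right 2 k).trans
  refine ⟨fun ⟨hq, hdvd⟩ => ?_, fun ⟨heven, hnot⟩ => ?_, fun hodd => ?_⟩
  · have heven := two_dvd_of hdvd
    rw [if_pos hdvd, if_pos (by omega), if_pos (by omega)]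
    norm_num
  · rcases Nat.eq_zero_or_pos q with rfl | hq
    · simp
    · rw [if_neg fun h => hnot ⟨hq, h⟩, if_pos (by grind), if_pos (by grind)]
      norm_num
  · have hnot2 : ¬ 2 ∣ q := by rcases hodd with ⟨c, rfl⟩; omega
    rw [if_neg (mt two_dvd_of hnot2)]
    split_ifs <;> first | omega | norm_num
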